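/- Let g = 4 and let B be the positive definite symmetric bilinear form on ℝ⁴ associated to the quadratic form Σ_{i=1}^{4} r_i x_i² + Σ_{1 ≤ i < j ≤ 4, (i,j) ∉ {(1,2),(3,4)}} r_{ij} (x_i − x_j)² + r·q_ω, where q_ω(x) = 2(x₁²+x₂²+x₃²+x₄²) + 2x₁x₂ − 2(x₁+x₂)(x₃+x₄), and all r_i, r_{ij}, r > 0 (i.e. B lies in the relative interior of V₂ ∩ V₃). Then conv{s₁, s₂, s₁+s₂, s₁+s₂+s₃, s₁+s₂+s₄, s₁+s₂+s₃+s₄} is a Delaunay cell of B; it is the union of the two simplices conv{s₁, s₂, s₁+s₂, s₁+s₂+s₃, s₁+s₂+s₃+s₄} and conv{s₁, s₂, s₁+s₂, s₁+s₂+s₄, s₁+s₂+s₃+s₄}, and also the union of the two simplices conv{s₁, s₂, s₁+s₂, s₁+s₂+s₃, s₁+s₂+s₄} and conv{s₁, s₂, s₁+s₂+s₃, s₁+s₂+s₄, s₁+s₂+s₃+s₄}. -/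

import Mathlib

open Matrix Set

noncomputable section

/-- The standard lattice `ℤ^g` sitting inside `ℝ^g`. -/
def latticePts (g : ℕ) : Set (Fin g → ℝ) :=
  Set.range (fun a : Fin g → ℤ => fun i => (a i : ℝ))

/-- `σ` is a (closed) Delaunay cell of the bilinear form `B`: there is an `α ∈ ℝ^g`
such that `σ` is the convex hull of the lattice points nearest to `α`
(with respect to the distance defined by `B`). -/
def IsDelaunayCell {g : ℕ} (B : (Fin g → ℝ) → (Fin g → ℝ) → ℝ)
    (σ : Set (Fin g → ℝ)) : Prop :=
  ∃ α : Fin g → ℝ, σ = convexHull ℝ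
    {a | a ∈ latticePts g ∧ ∀ b ∈ latticePts g, B (a - α) (a - α) ≤ B (b - α) (b - α)}

/-- `C(0,S)`: the cone generated by `S` over the nonnegative reals. -/
def cone0 {g : ℕ} (S : Set (Fin g → ℝ)) : Set (Fin g → ℝ) :=
  {x | ∃ r : ℝ, 0 ≤ r ∧ ∃ y ∈ convexHull ℝ S, x = r • y}

/-- `Semi(0, S ∩ ℤ^g)`: the additive submonoid generated by the lattice points of `S`. -/
def semi0 {g : ℕ} (S : Set (Fin g → ℝ)) : Set (Fin g → ℝ) :=
  (AddSubmonoid.closure (S ∩ latticePts g) : AddSubmonoid (Fin g → ℝ))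

/-- The standard basis vector `s_i` of `ℝ^g`. -/
def stdV (g : ℕ) (i : Fin g) : Fin g → ℝ := Pi.single i 1

/-- Translation of a subset of `ℝ^g` by a lattice vector `v ∈ ℤ^g`. -/
def zTrans {g : ℕ} (v : Fin g → ℤ) (S : Set (Fin g → ℝ)) : Set (Fin g → ℝ) :=
  (fun x => (fun i => (v i : ℝ)) + x) '' S

/-- The rank-one symmetric matrix of the squared linear form `(c ⬝ x)²`. -/
def sqM (c : Fin 4 → ℝ) : Matrix (Fin 4) (Fin 4) ℝ := vecMulVec c c

/-- The matrix of the quadratic form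
`q_ω(x) = 2(x₁²+x₂²+x₃²+x₄²) + 2x₁x₂ − 2(x₁+x₂)(x₃+x₄)`. -/
def Mω : Matrix (Fin 4) (Fin 4) ℝ :=
  !![(2:ℝ), 1, -1, -1; 1, 2, -1, -1; -1, -1, 2, 0; -1, -1, 0, 2]

/-- A point in the relative interior of `V₂ ∩ V₃`: the matrix of
`Σ rᵢ xᵢ² + Σ_{i<j, (i,j)∉{(1,2),(3,4)}} r_{ij} (xᵢ-xⱼ)² + r·q_ω`. -/
def MV2V3 (r₁ r₂ r₃ r₄ r₁₃ r₁₄ r₂₃ r₂₄ r : ℝ) : Matrix (Fin 4) (Fin 4) ℝ :=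
  r₁ • sqM (stdV 4 0) + r₂ • sqM (stdV 4 1) + r₃ • sqM (stdV 4 2) + r₄ • sqM (stdV 4 3)
    + r₁₃ • sqM (stdV 4 0 - stdV 4 2) + r₁₄ • sqM (stdV 4 0 - stdV 4 3)
    + r₂₃ • sqM (stdV 4 1 - stdV 4 2) + r₂₄ • sqM (stdV 4 1 - stdV 4 3)
    + r • Mω

/-!
Let `M = MV2V3 …` (positive definite), `c = linearV2V3 …`, and let `α` solve `M α = c / 2`.
For a lattice point `n`, `B(n - α, n - α) = B(α, α) - 2r + Σₖ wₖ dₖ(n)` with weights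
`w = (r₁, …, r₂₄, r)` and integer defects `dₖ(n)`: `t (t - 1)` for each of the linear forms
`t = xᵢ, xᵢ - xⱼ` squared in `B`, and, since
`q_ω(x) = x₁² + x₂² + (x₃ - x₄)² + (x₁ + x₂ - x₃ - x₄)²`, the defect
`(n₁ - 1)² + (n₂ - 1)² + (n₁ + n₂ - n₃ - n₄ - 1)² + (n₃ - n₄)² - 1` for `q_ω`, which is
nonnegative because the four integers being squared have odd sum. Hence the lattice points nearest
to `α` are the common zeros of the defects, which are exactly the six vertices.

The two triangulations come from the relation
`(s₁ + s₂) + (s₁ + s₂ + s₃ + s₄) = (s₁ + s₂ + s₃) + (s₁ + s₂ + s₄)`: if `p + q = u + w` with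
`u, w ∈ T`, a convex combination of `p`, `q` and `T` can trade the smaller of the weights of `p`
and `q` for weight on `u` and `w`, and so lies in `conv (T ∪ {p})` or in `conv (T ∪ {q})`.
-/

theorem Matrix.IsSymm.sub_dotProduct_mulVec_sub {n R : Type*} [Fintype n] [CommRing R]
    {M : Matrix n n R} (hM : M.IsSymm) (x y : n → R) :
    (x - y) ⬝ᵥ M *ᵥ (x - y) = x ⬝ᵥ M *ᵥ x - 2 * (x ⬝ᵥ M *ᵥ y) + y ⬝ᵥ M *ᵥ y := by
  have hyx : y ⬝ᵥ M *ᵥ x = x ⬝ᵥ M *ᵥ y := by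
    rw [dotProduct_mulVec, ← mulVec_transpose, hM.eq, dotProduct_comm]
  simp only [mulVec_sub, sub_dotProduct, dotProduct_sub, hyx]
  ring

theorem Matrix.mulVec_surjective_of_dotProduct_mulVec_self_eq_zero {n K : Type*} [Fintype n]
    [DecidableEq n] [Field K] {M : Matrix n n K} (h : ∀ x, x ⬝ᵥ M *ᵥ x = 0 → x = 0) :
    Function.Surjective M.mulVec := by
  refine mulVec_surjective_iff_isUnit.2 (mulVec_injective_iff_isUnit.1 ?_)
  refine (injective_iff_map_eq_zero M.mulVecLin).2 fun x hx => h x ?_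
  rw [show M *ᵥ x = 0 from hx, dotProduct_zero]

theorem Fintype.sum_mul_eq_zero_iff_of_pos {ι : Type*} [Fintype ι] {w t : ι → ℝ}
    (hw : ∀ i, 0 < w i) (ht : ∀ i, 0 ≤ t i) : ∑ i, w i * t i = 0 ↔ ∀ i, t i = 0 := by
  rw [Finset.sum_eq_zero_iff_of_nonneg fun i _ => mul_nonneg (hw i).le (ht i)]
  simp [(hw _).ne']

theorem Int.mul_sub_one_nonneg (n : ℤ) : 0 ≤ n * (n - 1) := by
  rcases le_or_gt n 0 with h | h <;> nlinarith

theorem Int.one_le_sq_add_sq_add_sq_add_sq_of_odd {x y z w : ℤ} (h : Odd (x + y + z + w)) :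
    1 ≤ x ^ 2 + y ^ 2 + z ^ 2 + w ^ 2 := by
  obtain ⟨m, hm⟩ : Odd (x ^ 2 + y ^ 2 + z ^ 2 + w ^ 2) := by
    simpa [Int.odd_add, Int.even_pow, Int.odd_pow] using h
  have : 0 ≤ x ^ 2 + y ^ 2 + z ^ 2 + w ^ 2 := by positivity
  omega

section Lattice

variable {g : ℕ}

theorem stdV_mem_latticePts (i : Fin g) : stdV g i ∈ latticePts g :=
  ⟨Pi.single i 1, by ext j; simp [stdV, Pi.single_apply]⟩

theorem add_mem_latticePts {x y : Fin g → ℝ} (hx : x ∈ latticePts g) (hy : y ∈ latticePts g) :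
    x + y ∈ latticePts g := by
  obtain ⟨a, rfl⟩ := hx
  obtain ⟨b, rfl⟩ := hy
  exact ⟨a + b, by ext; simp⟩

theorem isDelaunayCell_convexHull {B : (Fin g → ℝ) → (Fin g → ℝ) → ℝ} {S : Set (Fin g → ℝ)}
    (α : Fin g → ℝ) (m : ℝ) (hS : S ⊆ latticePts g) (hne : S.Nonempty)
    (hle : ∀ a ∈ latticePts g, m ≤ B (a - α) (a - α))
    (heq : ∀ a ∈ latticePts g, B (a - α) (a - α) = m ↔ a ∈ S) :
    IsDelaunayCell B (convexHull ℝ S) := by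
  refine ⟨α, congrArg _ (Set.ext fun a => ⟨fun ha => ?_, fun ⟨ha, hmin⟩ => ?_⟩)⟩
  · exact ⟨hS ha, fun b hb => ((heq a (hS ha)).2 ha).symm ▸ hle b hb⟩
  · obtain ⟨s, hs⟩ := hne
    refine (heq a ha).1 (le_antisymm ?_ (hle a ha))
    exact (heq s (hS hs)).2 hs ▸ hmin s (hS hs)

end Lattice

section ConvexHull

variable {E : Type*} [AddCommGroup E] [Module ℝ E] {p q u w : E} {T : Set E}

theorem smul_add_smul_add_smul_mem_convexHull_insert (hpq : p + q = u + w) (hu : u ∈ T)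
    (hw : w ∈ T) {z : E} (hz : z ∈ convexHull ℝ T) {a b c : ℝ} (ha : 0 ≤ a) (hab : a ≤ b)
    (hc : 0 ≤ c) (habc : a + b + c = 1) :
    a • p + b • q + c • z ∈ convexHull ℝ (insert q T) := by
  have hT : T ⊆ convexHull ℝ (insert q T) :=
    (Set.subset_insert q T).trans (subset_convexHull ℝ _)
  have key := (convex_convexHull ℝ (insert q T)).sum_mem (t := Finset.univ)
    (w := ![a, a, b - a, c]) (z := ![u, w, q, z])
    (by simp [Fin.forall_fin_succ, ha, hab, hc])
    (by
      simp only [Fin.sum_univ_four, Fin.isValue, cons_val_zero, cons_val_one, cons_val,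
        add_add_sub_cancel]
      linarith)
    (by simp [Fin.forall_fin_succ, hT hu, hT hw, subset_convexHull ℝ _ (Set.mem_insert q T),
      convexHull_mono (Set.subset_insert q T) hz])
  convert key using 1
  simp only [Fin.sum_univ_four, Fin.isValue, cons_val_zero, cons_val_one, cons_val]
  linear_combination (norm := module) a • hpq

theorem convexHull_insert_insert_eq_union (hpq : p + q = u + w) (hu : u ∈ T) (hw : w ∈ T) :
    convexHull ℝ (insert p (insert q T)) =
      convexHull ℝ (insert p T) ∪ convexHull ℝ (insert q T) := by
  refine subset_antisymm ?_ (Set.union_subset (convexHull_mono (Set.insert_subset_insert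
    (Set.subset_insert q T))) (convexHull_mono (Set.subset_insert p _)))
  intro x hx
  simp only [convexHull_insert (Set.insert_nonempty q T), convexHull_insert ⟨u, hu⟩,
    mem_convexJoin, Set.mem_singleton_iff, exists_eq_left] at hx
  obtain ⟨y, ⟨z, hz, b, c, hb, hc, hbc, rfl⟩, a, b', ha, hb', hab', rfl⟩ := hx
  have hx : a • p + b' • (b • q + c • z) = a • p + (b' * b) • q + (b' * c) • z := by module
  have hsum : a + b' * b + b' * c = 1 := by linear_combination hab' + b' * hbc
  rw [hx]
  rcases le_total a (b' * b) with hle | hle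
  · exact Or.inr (smul_add_smul_add_smul_mem_convexHull_insert hpq hu hw hz ha hle
      (mul_nonneg hb' hc) hsum)
  · rw [add_comm (a • p)]
    exact Or.inl (smul_add_smul_add_smul_mem_convexHull_insert ((add_comm q p).trans hpq) hu hw
      hz (mul_nonneg hb' hb) hle (mul_nonneg hb' hc) (by linarith))

end ConvexHull

def fusionCell : Set (Fin 4 → ℝ) :=
  {stdV 4 0, stdV 4 1, stdV 4 0 + stdV 4 1, stdV 4 0 + stdV 4 1 + stdV 4 2,
    stdV 4 0 + stdV 4 1 + stdV 4 3, stdV 4 0 + stdV 4 1 + stdV 4 2 + stdV 4 3}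

def weightsV2V3 (r₁ r₂ r₃ r₄ r₁₃ r₁₄ r₂₃ r₂₄ r : ℝ) : Fin 9 → ℝ :=
  ![r₁, r₂, r₃, r₄, r₁₃, r₁₄, r₂₃, r₂₄, r]

def defectsV2V3 (n : Fin 4 → ℤ) : Fin 9 → ℤ :=
  ![n 0 * (n 0 - 1), n 1 * (n 1 - 1), n 2 * (n 2 - 1), n 3 * (n 3 - 1),
    (n 0 - n 2) * (n 0 - n 2 - 1), (n 0 - n 3) * (n 0 - n 3 - 1),
    (n 1 - n 2) * (n 1 - n 2 - 1), (n 1 - n 3) * (n 1 - n 3 - 1),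
    (n 0 - 1) ^ 2 + (n 1 - 1) ^ 2 + (n 0 + n 1 - n 2 - n 3 - 1) ^ 2 + (n 2 - n 3) ^ 2 - 1]

def linearV2V3 (r₁ r₂ r₃ r₄ r₁₃ r₁₄ r₂₃ r₂₄ r : ℝ) : Fin 4 → ℝ :=
  ![r₁ + r₁₃ + r₁₄ + 4 * r, r₂ + r₂₃ + r₂₄ + 4 * r, r₃ - r₁₃ - r₂₃ - 2 * r,
    r₄ - r₁₄ - r₂₄ - 2 * r]

theorem fusionCell_subset_latticePts : fusionCell ⊆ latticePts 4 := by
  rintro x (rfl | rfl | rfl | rfl | rfl | rfl) <;>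
    repeat first | apply add_mem_latticePts | apply stdV_mem_latticePts

theorem defectsV2V3_nonneg (n : Fin 4 → ℤ) (k : Fin 9) : 0 ≤ defectsV2V3 n k := by
  fin_cases k <;> first
    | exact Int.mul_sub_one_nonneg _
    | exact sub_nonneg.2 (Int.one_le_sq_add_sq_add_sq_add_sq_of_odd ⟨n 0 + n 1 - n 3 - 2, by ring⟩)

theorem defectsV2V3_eq_zero_iff (n : Fin 4 → ℤ) :
    (∀ k, defectsV2V3 n k = 0) ↔ (fun i => (n i : ℝ)) ∈ fusionCell := by
  simp only [defectsV2V3, fusionCell, Fin.forall_fin_succ, Fin.isValue, cons_val_zero, mul_eq_zero,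
    sub_eq_zero, Fin.succ_zero_eq_one, Fin.succ_one_eq_two, Fin.reduceSucc,
    cons_val_succ, cons_val_fin_one, IsEmpty.forall_iff, and_true, stdV, mem_insert_iff, funext_iff,
    Pi.single_eq_same, Int.cast_eq_one, ne_eq, Fin.succ_ne_zero, not_false_eq_true,
    Pi.single_eq_of_ne, Int.cast_eq_zero, zero_ne_one, Fin.reduceEq, Pi.add_apply, add_zero,
    zero_add, mem_singleton_iff]
  constructor
  · rintro ⟨h0 | h0, h1 | h1, h2 | h2, h3 | h3, -, -, -, -, hψ⟩ <;> simp [h0, h1, h2, h3] at hψ ⊢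
  · rintro (h | h | h | h | h | h) <;> simp [h]

section V2V3

variable {r₁ r₂ r₃ r₄ r₁₃ r₁₄ r₂₃ r₂₄ r : ℝ}

theorem isSymm_sqM (c : Fin 4 → ℝ) : (sqM c).IsSymm := transpose_vecMulVec c c

theorem isSymm_Mω : Mω.IsSymm := by
  ext i j; fin_cases i <;> fin_cases j <;> rfl

theorem isSymm_MV2V3 : (MV2V3 r₁ r₂ r₃ r₄ r₁₃ r₁₄ r₂₃ r₂₄ r).IsSymm := by
  unfold MV2V3
  repeat apply IsSymm.add
  all_goals first | exact isSymm_Mω.smul _ | exact (isSymm_sqM _).smul _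

theorem MV2V3_quadForm (x : Fin 4 → ℝ) :
    x ⬝ᵥ MV2V3 r₁ r₂ r₃ r₄ r₁₃ r₁₄ r₂₃ r₂₄ r *ᵥ x =
      r₁ * x 0 ^ 2 + r₂ * x 1 ^ 2 + r₃ * x 2 ^ 2 + r₄ * x 3 ^ 2
      + r₁₃ * (x 0 - x 2) ^ 2 + r₁₄ * (x 0 - x 3) ^ 2
      + r₂₃ * (x 1 - x 2) ^ 2 + r₂₄ * (x 1 - x 3) ^ 2
      + r * (x 0 ^ 2 + x 1 ^ 2 + (x 2 - x 3) ^ 2 + (x 0 + x 1 - x 2 - x 3) ^ 2) := by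
  simp only [dotProduct, mulVec, MV2V3, sqM, vecMulVec, stdV, Fin.isValue, Pi.single_apply, mul_ite,
    mul_one, mul_zero, smul_of, of_add_of, Pi.sub_apply, Mω, smul_cons, smul_eq_mul, mul_neg,
    Matrix.smul_empty, Matrix.add_apply, of_apply, Pi.add_apply, Pi.smul_apply, cons_val',
    cons_val_fin_one, Fin.sum_univ_four, ↓reduceIte, zero_ne_one, add_zero, Fin.reduceEq, sub_zero,
    sub_self, cons_val_zero, one_ne_zero, zero_add, cons_val_one, zero_sub, neg_sub, cons_val,
    zero_mul]
  ring

theorem eq_zero_of_MV2V3_quadForm_eq_zero (h₁ : 0 < r₁) (h₂ : 0 < r₂) (h₃ : 0 < r₃) (h₄ : 0 < r₄)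
    (h₁₃ : 0 ≤ r₁₃) (h₁₄ : 0 ≤ r₁₄) (h₂₃ : 0 ≤ r₂₃) (h₂₄ : 0 ≤ r₂₄) (hr : 0 ≤ r)
    {x : Fin 4 → ℝ} (hx : x ⬝ᵥ MV2V3 r₁ r₂ r₃ r₄ r₁₃ r₁₄ r₂₃ r₂₄ r *ᵥ x = 0) : x = 0 := by
  rw [MV2V3_quadForm] at hx
  have hrest : 0 ≤ r₁₃ * (x 0 - x 2) ^ 2 + r₁₄ * (x 0 - x 3) ^ 2 + r₂₃ * (x 1 - x 2) ^ 2
      + r₂₄ * (x 1 - x 3) ^ 2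
      + r * (x 0 ^ 2 + x 1 ^ 2 + (x 2 - x 3) ^ 2 + (x 0 + x 1 - x 2 - x 3) ^ 2) := by positivity
  have hcoord : ∑ i, ![r₁, r₂, r₃, r₄] i * x i ^ 2 = 0 := by
    simp only [Fin.sum_univ_four, Fin.isValue, cons_val_zero, cons_val_one, cons_val]
    linarith [show 0 ≤ r₁ * x 0 ^ 2 + r₂ * x 1 ^ 2 + r₃ * x 2 ^ 2 + r₄ * x 3 ^ 2 by positivity]
  have hsq := (Fintype.sum_mul_eq_zero_iff_of_pos (by simp [Fin.forall_fin_succ, *])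
    fun i => sq_nonneg (x i)).1 hcoord
  exact funext fun i => pow_eq_zero_iff two_ne_zero |>.1 (hsq i)

theorem MV2V3_quadForm_sub_linear_eq_sum (n : Fin 4 → ℤ) :
    (fun i => (n i : ℝ)) ⬝ᵥ MV2V3 r₁ r₂ r₃ r₄ r₁₃ r₁₄ r₂₃ r₂₄ r *ᵥ (fun i => (n i : ℝ))
      - (fun i => (n i : ℝ)) ⬝ᵥ linearV2V3 r₁ r₂ r₃ r₄ r₁₃ r₁₄ r₂₃ r₂₄ r + 2 * r =
      ∑ k, weightsV2V3 r₁ r₂ r₃ r₄ r₁₃ r₁₄ r₂₃ r₂₄ r k * (defectsV2V3 n k : ℝ) := by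
  rw [MV2V3_quadForm]
  simp only [dotProduct, weightsV2V3, defectsV2V3, linearV2V3, Fin.sum_univ_succ, Fin.isValue,
    cons_val_zero, cons_val_succ, Fin.succ_zero_eq_one, Fin.succ_one_eq_two, Finset.univ_unique,
    Fin.default_eq_zero, cons_val_fin_one, Finset.sum_singleton, Fin.reduceSucc, Int.cast_mul,
    Int.cast_sub, Int.cast_one, Int.cast_add, Int.cast_pow, Finset.sum_const, Finset.card_singleton,
    one_smul]
  ring

theorem isDelaunayCell_fusionCell (h₁ : 0 < r₁) (h₂ : 0 < r₂) (h₃ : 0 < r₃) (h₄ : 0 < r₄)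
    (h₁₃ : 0 < r₁₃) (h₁₄ : 0 < r₁₄) (h₂₃ : 0 < r₂₃) (h₂₄ : 0 < r₂₄) (hr : 0 < r) :
    IsDelaunayCell (fun x y => x ⬝ᵥ MV2V3 r₁ r₂ r₃ r₄ r₁₃ r₁₄ r₂₃ r₂₄ r *ᵥ y)
      (convexHull ℝ fusionCell) := by
  set M := MV2V3 r₁ r₂ r₃ r₄ r₁₃ r₁₄ r₂₃ r₂₄ r
  have hw : ∀ k, 0 < weightsV2V3 r₁ r₂ r₃ r₄ r₁₃ r₁₄ r₂₃ r₂₄ r k := by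
    simp [Fin.forall_fin_succ, weightsV2V3, *]
  have hd : ∀ n k, (0 : ℝ) ≤ defectsV2V3 n k := fun n k => Int.cast_nonneg (defectsV2V3_nonneg n k)
  obtain ⟨α, hα⟩ := mulVec_surjective_of_dotProduct_mulVec_self_eq_zero
    (fun x => eq_zero_of_MV2V3_quadForm_eq_zero h₁ h₂ h₃ h₄ h₁₃.le h₁₄.le h₂₃.le h₂₄.le hr.le)
    ((2 : ℝ)⁻¹ • linearV2V3 r₁ r₂ r₃ r₄ r₁₃ r₁₄ r₂₃ r₂₄ r)
  have hshift (n : Fin 4 → ℤ) :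
      ((fun i => (n i : ℝ)) - α) ⬝ᵥ M *ᵥ ((fun i => (n i : ℝ)) - α) =
        ∑ k, weightsV2V3 r₁ r₂ r₃ r₄ r₁₃ r₁₄ r₂₃ r₂₄ r k * (defectsV2V3 n k : ℝ)
          + (α ⬝ᵥ M *ᵥ α - 2 * r) := by
    rw [isSymm_MV2V3.sub_dotProduct_mulVec_sub, hα, dotProduct_smul, smul_eq_mul,
      ← MV2V3_quadForm_sub_linear_eq_sum]
    ring
  refine isDelaunayCell_convexHull α (α ⬝ᵥ M *ᵥ α - 2 * r) fusionCell_subset_latticePts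
    ⟨_, Set.mem_insert _ _⟩ ?_ ?_
  · rintro _ ⟨n, rfl⟩
    rw [hshift, le_add_iff_nonneg_left]
    exact Finset.sum_nonneg fun k _ => mul_nonneg (hw k).le (hd n k)
  · rintro _ ⟨n, rfl⟩
    rw [hshift, add_eq_right, Fintype.sum_mul_eq_zero_iff_of_pos hw (hd n),
      ← defectsV2V3_eq_zero_iff]
    simp

end V2V3

theorem delaunay_fusion_V2_V3
    (r₁ r₂ r₃ r₄ r₁₃ r₁₄ r₂₃ r₂₄ r : ℝ)
    (h₁ : 0 < r₁) (h₂ : 0 < r₂) (h₃ : 0 < r₃) (h₄ : 0 < r₄)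
    (h₁₃ : 0 < r₁₃) (h₁₄ : 0 < r₁₄)
    (h₂₃ : 0 < r₂₃) (h₂₄ : 0 < r₂₄) (hr : 0 < r) :
    IsDelaunayCell
      (fun x y => x ⬝ᵥ (MV2V3 r₁ r₂ r₃ r₄ r₁₃ r₁₄ r₂₃ r₂₄ r).mulVec y)
      (convexHull ℝ
        {stdV 4 0, stdV 4 1, stdV 4 0 + stdV 4 1,
          stdV 4 0 + stdV 4 1 + stdV 4 2, stdV 4 0 + stdV 4 1 + stdV 4 3,
          stdV 4 0 + stdV 4 1 + stdV 4 2 + stdV 4 3}) ∧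
    convexHull ℝ
        {stdV 4 0, stdV 4 1, stdV 4 0 + stdV 4 1,
          stdV 4 0 + stdV 4 1 + stdV 4 2, stdV 4 0 + stdV 4 1 + stdV 4 3,
          stdV 4 0 + stdV 4 1 + stdV 4 2 + stdV 4 3} =
      convexHull ℝ
        {stdV 4 0, stdV 4 1, stdV 4 0 + stdV 4 1,
          stdV 4 0 + stdV 4 1 + stdV 4 2,
          stdV 4 0 + stdV 4 1 + stdV 4 2 + stdV 4 3} ∪
      convexHull ℝ
        {stdV 4 0, stdV 4 1, stdV 4 0 + stdV 4 1,
          stdV 4 0 + stdV 4 1 + stdV 4 3,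
          stdV 4 0 + stdV 4 1 + stdV 4 2 + stdV 4 3} ∧
    convexHull ℝ
        {stdV 4 0, stdV 4 1, stdV 4 0 + stdV 4 1,
          stdV 4 0 + stdV 4 1 + stdV 4 2, stdV 4 0 + stdV 4 1 + stdV 4 3,
          stdV 4 0 + stdV 4 1 + stdV 4 2 + stdV 4 3} =
      convexHull ℝ
        {stdV 4 0, stdV 4 1, stdV 4 0 + stdV 4 1,
          stdV 4 0 + stdV 4 1 + stdV 4 2, stdV 4 0 + stdV 4 1 + stdV 4 3} ∪
      convexHull ℝ
        {stdV 4 0, stdV 4 1,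
          stdV 4 0 + stdV 4 1 + stdV 4 2, stdV 4 0 + stdV 4 1 + stdV 4 3,
          stdV 4 0 + stdV 4 1 + stdV 4 2 + stdV 4 3} := by
  have hrel : (stdV 4 0 + stdV 4 1) + (stdV 4 0 + stdV 4 1 + stdV 4 2 + stdV 4 3) =
      (stdV 4 0 + stdV 4 1 + stdV 4 2) + (stdV 4 0 + stdV 4 1 + stdV 4 3) := by abel
  refine ⟨isDelaunayCell_fusionCell h₁ h₂ h₃ h₄ h₁₃ h₁₄ h₂₃ h₂₄ hr, ?_, ?_⟩
  · convert convexHull_insert_insert_eq_union hrel.symm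
      (T := {stdV 4 0, stdV 4 1, stdV 4 0 + stdV 4 1, stdV 4 0 + stdV 4 1 + stdV 4 2 + stdV 4 3})
      (by simp) (by simp) using 2
    · ext; simp only [Set.mem_insert_iff, Set.mem_singleton_iff]; tauto
    all_goals congr 1; ext; simp only [Set.mem_insert_iff, Set.mem_singleton_iff]; tauto
  · convert convexHull_insert_insert_eq_union hrel
      (T := {stdV 4 0, stdV 4 1, stdV 4 0 + stdV 4 1 + stdV 4 2, stdV 4 0 + stdV 4 1 + stdV 4 3})
      (by simp) (by simp) using 2
    · ext; simp only [Set.mem_insert_iff, Set.mem_singleton_iff]; tauto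
    all_goals congr 1; ext; simp only [Set.mem_insert_iff, Set.mem_singleton_iff]; tauto
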